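/- For every m ≥ 0 there exist real polynomials q and q' such that, as polynomial identities in p, d_m(p)·d_m(p+1) = q(p² + p) and n_m(p)·d_m(p+1) - n_m(p+1)·d_m(p) = q'(p² + p). That is, both the denominator and the numerator of g_m(p) - g_m(p+1) are polynomials in z = p(p+1). -/

import Mathlib

open Polynomial

/-- Numerators of the continued fraction `a_1/(p + a_2/(p + ⋯))`, shifted index:
`nseq a (k+1) = n_k`, with `n_{-1} = 1`, `n_0 = 0`, and
`n_k = p·n_{k-1} + a_k·n_{k-2}` for `k ≥ 1`. -/
noncomputable def nseq (a : ℕ → ℝ) : ℕ → Polynomial ℝ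
  | 0 => 1
  | 1 => 0
  | (k+2) => X * nseq a (k+1) + C (a (k+1)) * nseq a k

/-- Denominators of the continued fraction `a_1/(p + a_2/(p + ⋯))`, shifted index:
`dseq a (k+1) = d_k`, with `d_{-1} = 0`, `d_0 = 1`, and
`d_k = p·d_{k-1} + a_k·d_{k-2}` for `k ≥ 1`. -/
noncomputable def dseq (a : ℕ → ℝ) : ℕ → Polynomial ℝ
  | 0 => 0
  | 1 => 1
  | (k+2) => X * dseq a (k+1) + C (a (k+1)) * dseq a k

lemma comp_neg_dseq (a : ℕ → ℝ) : ∀ k, (dseq a k).comp (-X) = (-1)^(k+1) * dseq a k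
  | 0 => by simp [dseq]
  | 1 => by simp [dseq]
  | (k+2) => by
    have h1 := comp_neg_dseq a (k+1)
    have h2 := comp_neg_dseq a k
    simp only [dseq, add_comp, mul_comp, X_comp, C_comp, h1, h2]
    ring

lemma comp_neg_nseq (a : ℕ → ℝ) : ∀ k, (nseq a k).comp (-X) = (-1)^k * nseq a k
  | 0 => by simp [nseq]
  | 1 => by simp [nseq]
  | (k+2) => by
    have h1 := comp_neg_nseq a (k+1)
    have h2 := comp_neg_nseq a k
    simp only [nseq, add_comp, mul_comp, X_comp, C_comp, h1, h2]
    ring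

lemma monic_w : (X^2 + X : Polynomial ℝ).Monic := by
  have := (monic_X_pow (R := ℝ) 2).add_of_left (q := X) ?_
  · exact this
  · rw [degree_X_pow, degree_X]; norm_num

lemma degree_w : (X^2 + X : Polynomial ℝ).degree = 2 := by
  rw [degree_add_eq_left_of_degree_lt]
  · rw [degree_X_pow]; rfl
  · rw [degree_X_pow, degree_X]; norm_num

lemma natDegree_w : (X^2 + X : Polynomial ℝ).natDegree = 2 :=
  natDegree_eq_of_degree_eq_some degree_w

lemma w_comp : (X^2 + X : Polynomial ℝ).comp (-(X+1)) = X^2 + X := by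
  simp only [add_comp, pow_comp, X_comp]
  ring

/-- Any polynomial invariant under `p ↦ -(p+1)` is a polynomial in `X^2 + X`. -/
lemma invariant_is_comp :
    ∀ n (f : Polynomial ℝ), f.natDegree ≤ n → f.comp (-(X+1)) = f →
      ∃ q : Polynomial ℝ, f = q.comp (X^2 + X) := by
  intro n
  induction n using Nat.strong_induction_on with
  | _ n ih =>
    intro f hdeg hσ
    by_cases hsmall : f.natDegree ≤ 1
    · -- base case: f is linear, invariance forces it constant
      have hf := eq_X_add_C_of_natDegree_le_one hsmall
      have hc : f.coeff 1 = 0 := by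
        have h1 := congrArg (fun p => Polynomial.coeff p 1) hσ
        rw [hf] at h1
        simp only [add_comp, mul_comp, C_comp, X_comp] at h1
        have : (C (f.coeff 1) * -(X + 1) + C (f.coeff 0)) =
            C (-f.coeff 1) * X + C (f.coeff 0 - f.coeff 1) := by
          simp only [map_neg, map_sub]; ring
        rw [this] at h1
        simp only [coeff_add, coeff_C_mul, coeff_X_one, coeff_C] at h1
        norm_num at h1
        linarith
      refine ⟨C (f.coeff 0), ?_⟩
      rw [hf, hc]
      simp
    · push_neg at hsmall
      set w : Polynomial ℝ := X^2 + X with hw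
      set g := f /ₘ w with hg
      set r := f %ₘ w with hr
      have hfr : r + w * g = f := modByMonic_add_div f w
      have hdegr : r.degree < 2 := by
        have := degree_modByMonic_lt f monic_w
        rwa [degree_w] at this
      have hdegr1 : r.natDegree ≤ 1 := by
        rcases eq_or_ne r 0 with h | h
        · simp [h]
        · have := (degree_eq_natDegree h) ▸ hdegr
          exact_mod_cast Nat.lt_succ_iff.mp (by exact_mod_cast this)
      have hrX := eq_X_add_C_of_natDegree_le_one hdegr1
      -- the composed remainder
      have hrcomp : r.comp (-(X+1)) = C (-r.coeff 1) * X + C (r.coeff 0 - r.coeff 1) := by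
        conv_lhs => rw [hrX]
        simp only [add_comp, mul_comp, C_comp, X_comp, map_neg, map_sub]
        ring
      have hdegrc : (r.comp (-(X+1))).degree < w.degree := by
        rw [hrcomp, degree_w]
        exact lt_of_le_of_lt (degree_linear_le) (by norm_num)
      -- uniqueness of division
      have hdiv : f /ₘ w = g.comp (-(X+1)) ∧ f %ₘ w = r.comp (-(X+1)) := by
        refine div_modByMonic_unique _ _ monic_w ⟨?_, hdegrc⟩
        · have := congrArg (fun p => p.comp (-(X+1))) hfr
          simp only [add_comp, mul_comp] at this
          rw [w_comp] at this
          rw [← hw] at this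
          rw [hσ] at this
          linear_combination this
      have hginv : g.comp (-(X+1)) = g := (hdiv.1).symm
      have hrinv : r.comp (-(X+1)) = r := (hdiv.2).symm
      -- r is constant
      have hc : r.coeff 1 = 0 := by
        have h1 := congrArg (fun p => Polynomial.coeff p 1) hrinv
        rw [hrcomp] at h1
        conv_rhs at h1 => rw [hrX]
        simp only [coeff_add, coeff_C_mul, coeff_X_one, coeff_C] at h1
        norm_num at h1
        linarith
      have hrconst : r = C (r.coeff 0) := by rw [hrX, hc]; simp
      -- degree of g drops
      have hdegg : g.natDegree < n := by
        have : g.natDegree = f.natDegree - 2 := by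
          rw [hg, natDegree_divByMonic f monic_w, natDegree_w]
        omega
      obtain ⟨qg, hqg⟩ := ih g.natDegree hdegg g le_rfl hginv
      refine ⟨X * qg + C (r.coeff 0), ?_⟩
      rw [add_comp, mul_comp, X_comp, C_comp, ← hqg]
      rw [← hfr, hrconst]
      simp only [coeff_C_zero]
      ring

/-- Both the denominator `d_m(p)·d_m(p+1)` and the numerator
`n_m(p)·d_m(p+1) - n_m(p+1)·d_m(p)` of `g_m(p) - g_m(p+1)` are polynomials in
`z = p(p+1)`. -/
theorem gm_difference_rational_in_z (a : ℕ → ℝ) (m : ℕ) :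
    ∃ q q' : Polynomial ℝ,
      dseq a (m+1) * (dseq a (m+1)).comp (X + 1) = q.comp (X^2 + X) ∧
      nseq a (m+1) * (dseq a (m+1)).comp (X + 1)
        - (nseq a (m+1)).comp (X + 1) * dseq a (m+1) = q'.comp (X^2 + X) := by
  set d := dseq a (m+1) with hd
  set nn := nseq a (m+1) with hn
  have hdneg : d.comp (-X) = (-1)^(m+2) * d := comp_neg_dseq a (m+1)
  have hnneg : nn.comp (-X) = (-1)^(m+1) * nn := comp_neg_nseq a (m+1)
  -- composing with -(X+1)
  have hcomp_eq : (-(X+1) : Polynomial ℝ) = (-X : Polynomial ℝ).comp (X+1) := by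
    simp
  have hdneg1 : d.comp (-(X+1)) = (-1)^(m+2) * d.comp (X+1) := by
    rw [hcomp_eq, ← comp_assoc, hdneg, mul_comp]
    simp
  have hnneg1 : nn.comp (-(X+1)) = (-1)^(m+1) * nn.comp (X+1) := by
    rw [hcomp_eq, ← comp_assoc, hnneg, mul_comp]
    simp
  have hX1 : ((X + 1 : Polynomial ℝ)).comp (-(X+1)) = -X := by
    simp only [add_comp, X_comp, one_comp]; ring
  have hsq : ((-1 : Polynomial ℝ))^(m+2) * (-1)^(m+2) = 1 := by
    rw [← pow_add]
    exact Even.neg_one_pow ⟨m+2, by ring⟩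
  have hsgn : ((-1 : Polynomial ℝ))^(m+1) * (-1)^(m+2) = -1 := by
    rw [← pow_add]
    exact Odd.neg_one_pow ⟨m+1, by ring⟩
  obtain ⟨q, hq⟩ := invariant_is_comp (d * d.comp (X+1)).natDegree (d * d.comp (X+1)) le_rfl
    (by rw [mul_comp, comp_assoc, hX1, hdneg1, hdneg]
        linear_combination (d.comp (X+1) * d) * hsq)
  obtain ⟨q', hq'⟩ := invariant_is_comp
    (nn * d.comp (X+1) - nn.comp (X+1) * d).natDegree _ le_rfl
    (by rw [sub_comp, mul_comp, mul_comp, comp_assoc, comp_assoc, hX1, hdneg1, hnneg1,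
          hdneg, hnneg]
        linear_combination (nn.comp (X+1) * d - nn * d.comp (X+1)) * hsgn)
  exact ⟨q, q', hq, hq'⟩
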